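/- (Euler–Maruyama contraction.) Assume γ ≥ 2√M and 0 < h < 1/(2γ). Let (ξ_k)_{k≥1} be an arbitrary sequence of vectors in ℝⁿ, and let (x_k, v_k) and (x̃_k, ṽ_k) be two trajectories of the Euler–Maruyama scheme x_{k+1} = x_k + h v_k, v_{k+1} = v_k − h∇U(x_k) − hγ v_k + √(2γh) ξ_{k+1}, driven by the same noise sequence (ξ_k) (synchronous coupling). Then with a = 1/M and b = 1/γ, for every k ≥ 0, ‖(x_k − x̃_k, v_k − ṽ_k)‖_{a,b} ≤ (1 − mh/(2γ))^{k/2} · ‖(x_0 − x̃_0, v_0 − ṽ_0)‖_{a,b}. -/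

import Mathlib

/-!
The common noise cancels in the difference `(d, w) = (x - x̃, v - ṽ)` of the two trajectories,
which therefore follows the deterministic recursion `d ↦ d + h w`, `w ↦ w - h g - hγ w` with
`g = ∇U(x) - ∇U(x̃)`. The Hessian bounds give strong monotonicity `m‖d‖² ≤ ⟨g, d⟩` and, through
the descent lemma, co-coercivity `‖g‖² ≤ M ⟨g, d⟩`. With `a = 1/M` and `b = 1/γ`, the defect
`(1 - mh/(2γ)) ‖(d, w)‖²_{a,b} - ‖(d + h w, w - h g - hγ w)‖²_{a,b}` is an explicit nonnegative
combination of these two inequalities and of the squares `‖γd - 2w‖²`, `‖γw + g‖²`; iterating and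
taking square roots gives the claim.
-/

open scoped RealInnerProductSpace

/-- The modified Euclidean norm `‖(x,v)‖_{a,b} = √(‖x‖² + 2b⟨x,v⟩ + a‖v‖²)`. -/
noncomputable def modNorm {n : ℕ} (a b : ℝ)
    (z : EuclideanSpace ℝ (Fin n) × EuclideanSpace ℝ (Fin n)) : ℝ :=
  Real.sqrt (‖z.1‖ ^ 2 + 2 * b * ⟪z.1, z.2⟫ + a * ‖z.2‖ ^ 2)

open Set

variable {F : Type*} [NormedAddCommGroup F] [InnerProductSpace ℝ F]

lemma exists_inner_sub_eq_inner_fderiv {G : F → F} (hG : Differentiable ℝ G) (p q : F) :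
    ∃ z, ⟪G p - G q, p - q⟫ = ⟪fderiv ℝ G z (p - q), p - q⟫ := by
  have hf : ∀ x ∈ univ, HasFDerivWithinAt (fun y ↦ ⟪p - q, G y⟫)
      ((innerSL ℝ (p - q)).comp (fderiv ℝ G x)) univ x := fun x _ ↦
    ((innerSL ℝ (p - q)).hasFDerivAt.comp x (hG x).hasFDerivAt).hasFDerivWithinAt
  obtain ⟨z, -, hz⟩ := domain_mvt hf convex_univ (mem_univ q) (mem_univ p)
  rw [ContinuousLinearMap.comp_apply, innerSL_apply_apply, ← inner_sub_right] at hz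
  exact ⟨z, by rw [real_inner_comm, hz, real_inner_comm]⟩

lemma mul_norm_sub_sq_le_inner_of_fderiv {G : F → F} {m : ℝ} (hG : Differentiable ℝ G)
    (hm : ∀ x d, m * ‖d‖ ^ 2 ≤ ⟪fderiv ℝ G x d, d⟫) (p q : F) :
    m * ‖p - q‖ ^ 2 ≤ ⟪G p - G q, p - q⟫ := by
  obtain ⟨z, hz⟩ := exists_inner_sub_eq_inner_fderiv hG p q
  exact hz ▸ hm z (p - q)

lemma inner_le_mul_norm_sub_sq_of_fderiv {G : F → F} {M : ℝ} (hG : Differentiable ℝ G)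
    (hM : ∀ x d, ⟪fderiv ℝ G x d, d⟫ ≤ M * ‖d‖ ^ 2) (p q : F) :
    ⟪G p - G q, p - q⟫ ≤ M * ‖p - q‖ ^ 2 := by
  obtain ⟨z, hz⟩ := exists_inner_sub_eq_inner_fderiv hG p q
  exact hz ▸ hM z (p - q)

lemma inner_add_smul_sub_le_of_inner_sub_le {G : F → F} {c : ℝ}
    (hc : ∀ p q, ⟪G p - G q, p - q⟫ ≤ c * ‖p - q‖ ^ 2) (p e : F) {t : ℝ} (ht : 0 < t) :
    ⟪G (p + t • e) - G p, e⟫ ≤ c * t * ‖e‖ ^ 2 := by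
  have h := hc (p + t • e) p
  rw [add_sub_cancel_left, real_inner_smul_right, norm_smul, mul_pow, Real.norm_eq_abs,
    sq_abs] at h
  exact le_of_mul_le_mul_left (by linarith) ht

lemma le_inner_add_smul_sub_of_le_inner_sub {G : F → F} {c : ℝ}
    (hc : ∀ p q, c * ‖p - q‖ ^ 2 ≤ ⟪G p - G q, p - q⟫) (p e : F) {t : ℝ} (ht : 0 < t) :
    c * t * ‖e‖ ^ 2 ≤ ⟪G (p + t • e) - G p, e⟫ := by
  have h := hc (p + t • e) p
  rw [add_sub_cancel_left, real_inner_smul_right, norm_smul, mul_pow, Real.norm_eq_abs,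
    sq_abs] at h
  exact le_of_mul_le_mul_left (by linarith) ht

lemma sub_le_sub_of_hasDerivAt_le {f f' g g' : ℝ → ℝ} (hf : ∀ t, HasDerivAt f (f' t) t)
    (hg : ∀ t, HasDerivAt g (g' t) t) (hle : ∀ t ∈ Ioo 0 1, f' t ≤ g' t) :
    f 1 - f 0 ≤ g 1 - g 0 := by
  have hmono : MonotoneOn (fun t ↦ g t - f t) (Icc 0 1) := by
    refine monotoneOn_of_hasDerivWithinAt_nonneg (convex_Icc 0 1)
      (fun t _ ↦ ((hg t).sub (hf t)).continuousAt.continuousWithinAt)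
      (fun t _ ↦ ((hg t).sub (hf t)).hasDerivWithinAt) fun t ht ↦ ?_
    rw [interior_Icc] at ht
    exact sub_nonneg.2 (hle t ht)
  have := hmono (left_mem_Icc.2 zero_le_one) (right_mem_Icc.2 zero_le_one) zero_le_one
  linarith

lemma hasDerivAt_quadratic (a b t : ℝ) :
    HasDerivAt (fun s ↦ s * a + b / 2 * s ^ 2) (a + b * t) t :=
  (((hasDerivAt_id' t).mul_const a).add ((hasDerivAt_pow 2 t).const_mul (b / 2))).congr_deriv
    (by push_cast; ring)

section Gradient

variable [CompleteSpace F] {U : F → ℝ}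

lemma ContDiff.differentiable_gradient (hU : ContDiff ℝ 2 U) : Differentiable ℝ (gradient U) :=
  ((InnerProductSpace.toDual ℝ F).symm.contDiff.comp
    (hU.fderiv_right (m := 1) (by norm_num))).differentiable one_ne_zero

lemma Differentiable.hasDerivAt_comp_add_smul (hU : Differentiable ℝ U) (p e : F) (t : ℝ) :
    HasDerivAt (fun s : ℝ ↦ U (p + s • e)) ⟪gradient U (p + t • e), e⟫ t := by
  have hline : HasDerivAt (fun s : ℝ ↦ p + s • e) e t := by
    simpa using ((hasDerivAt_id t).smul_const e).const_add p
  rw [inner_gradient_left]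
  exact (hU _).hasFDerivAt.comp_hasDerivAt t hline

lemma le_add_inner_gradient_add_of_inner_sub_le (hU : Differentiable ℝ U) {c : ℝ}
    (hc : ∀ p q, ⟪gradient U p - gradient U q, p - q⟫ ≤ c * ‖p - q‖ ^ 2) (p q : F) :
    U q ≤ U p + ⟪gradient U p, q - p⟫ + c / 2 * ‖q - p‖ ^ 2 := by
  have h := sub_le_sub_of_hasDerivAt_le (hU.hasDerivAt_comp_add_smul p (q - p))
    (hasDerivAt_quadratic ⟪gradient U p, q - p⟫ (c * ‖q - p‖ ^ 2)) fun t ht ↦ by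
      have := inner_add_smul_sub_le_of_inner_sub_le hc p (q - p) ht.1
      rw [inner_sub_left] at this
      linarith
  simp only [one_smul, zero_smul, add_zero, add_sub_cancel] at h
  linarith

lemma add_inner_gradient_add_le_of_le_inner_sub (hU : Differentiable ℝ U) {c : ℝ}
    (hc : ∀ p q, c * ‖p - q‖ ^ 2 ≤ ⟪gradient U p - gradient U q, p - q⟫) (p q : F) :
    U p + ⟪gradient U p, q - p⟫ + c / 2 * ‖q - p‖ ^ 2 ≤ U q := by
  have h := sub_le_sub_of_hasDerivAt_le
    (hasDerivAt_quadratic ⟪gradient U p, q - p⟫ (c * ‖q - p‖ ^ 2))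
    (hU.hasDerivAt_comp_add_smul p (q - p)) fun t ht ↦ by
      have := le_inner_add_smul_sub_of_le_inner_sub hc p (q - p) ht.1
      rw [inner_sub_left] at this
      linarith
  simp only [one_smul, zero_smul, add_zero, add_sub_cancel] at h
  linarith

section Cocoercive

variable {M : ℝ} (hU : Differentiable ℝ U) (hM : 0 < M)
  (hmono : ∀ p q, 0 ≤ ⟪gradient U p - gradient U q, p - q⟫)
  (hlip : ∀ p q, ⟪gradient U p - gradient U q, p - q⟫ ≤ M * ‖p - q‖ ^ 2)
include hU hM hmono hlip

-- Compare the descent bound from `p` with the convexity bound from `q` at `z = p - M⁻¹ g`.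
lemma add_inner_gradient_add_norm_sq_div_le (p q : F) :
    U q + ⟪gradient U q, p - q⟫ + ‖gradient U p - gradient U q‖ ^ 2 / (2 * M) ≤ U p := by
  set g := gradient U p - gradient U q
  set z := p - M⁻¹ • g
  have hdescent := le_add_inner_gradient_add_of_inner_sub_le hU hlip p z
  have hconvex := add_inner_gradient_add_le_of_le_inner_sub hU (c := 0)
    (fun p q ↦ by simpa using hmono p q) q z
  have hzp : z - p = -(M⁻¹ • g) := by simp [z]
  have hzq : z - q = (p - q) - M⁻¹ • g := by simp only [z]; abel
  rw [hzp, inner_neg_right, real_inner_smul_right, norm_neg, norm_smul, mul_pow,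
    Real.norm_eq_abs, sq_abs] at hdescent
  rw [hzq, inner_sub_right, real_inner_smul_right] at hconvex
  have hg : M⁻¹ * ⟪gradient U p, g⟫ - M⁻¹ * ⟪gradient U q, g⟫ = M⁻¹ * ‖g‖ ^ 2 := by
    rw [← mul_sub, ← inner_sub_left, real_inner_self_eq_norm_sq]
  have hsplit : M / 2 * (M⁻¹ ^ 2 * ‖g‖ ^ 2) + ‖g‖ ^ 2 / (2 * M) = M⁻¹ * ‖g‖ ^ 2 := by
    field_simp
    ring
  rw [zero_div, zero_mul, add_zero] at hconvex
  linarith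

lemma norm_gradient_sub_sq_le_mul_inner (p q : F) :
    ‖gradient U p - gradient U q‖ ^ 2 ≤ M * ⟪gradient U p - gradient U q, p - q⟫ := by
  have hpq := add_inner_gradient_add_norm_sq_div_le hU hM hmono hlip p q
  have hqp := add_inner_gradient_add_norm_sq_div_le hU hM hmono hlip q p
  rw [norm_sub_rev, ← neg_sub p q, inner_neg_right] at hqp
  have hsum : ‖gradient U p - gradient U q‖ ^ 2 / M ≤ ⟪gradient U p - gradient U q, p - q⟫ := by
    have hsplit : ‖gradient U p - gradient U q‖ ^ 2 / M =
        2 * (‖gradient U p - gradient U q‖ ^ 2 / (2 * M)) := by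
      field_simp
    rw [inner_sub_left]
    linarith
  rwa [div_le_iff₀' hM] at hsum

end Cocoercive

end Gradient

-- `modNorm a b z` unfolds to `√(modNormSq a b z)`.
def modNormSq (a b : ℝ) (z : F × F) : ℝ :=
  ‖z.1‖ ^ 2 + 2 * b * ⟪z.1, z.2⟫ + a * ‖z.2‖ ^ 2

lemma norm_smul_add_smul_sq (a b : ℝ) (x y : F) :
    ‖a • x + b • y‖ ^ 2 = a ^ 2 * ‖x‖ ^ 2 + 2 * a * b * ⟪x, y⟫ + b ^ 2 * ‖y‖ ^ 2 := by
  rw [norm_add_sq_real, real_inner_smul_left, real_inner_smul_right, norm_smul, norm_smul,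
    mul_pow, mul_pow, Real.norm_eq_abs, Real.norm_eq_abs, sq_abs, sq_abs]
  ring

lemma modNormSq_step_le {m M γ h : ℝ} (hm : 0 ≤ m) (hmM : m ≤ M) (hM : 0 < M) (hγ : 0 < γ)
    (hγM : 4 * M ≤ γ ^ 2) (hh : 0 ≤ h) (hhγ : h * γ ≤ 1) {d w g : F}
    (hstrong : m * ‖d‖ ^ 2 ≤ ⟪g, d⟫) (hcoco : ‖g‖ ^ 2 ≤ M * ⟪g, d⟫) :
    modNormSq (1 / M) (1 / γ) (d + h • w, w - h • g - (h * γ) • w) ≤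
      (1 - m * h / (2 * γ)) * modNormSq (1 / M) (1 / γ) (d, w) := by
  rw [real_inner_comm] at hstrong hcoco
  have hdw : 0 ≤ γ ^ 2 * ‖d‖ ^ 2 - 4 * γ * ⟪d, w⟫ + 4 * ‖w‖ ^ 2 := by
    linarith [norm_smul_add_smul_sq γ (-2) d w, sq_nonneg ‖γ • d + (-2 : ℝ) • w‖]
  have hgw : 0 ≤ γ ^ 2 * ‖w‖ ^ 2 + 2 * γ * ⟪w, g⟫ + ‖g‖ ^ 2 := by
    linarith [norm_smul_add_smul_sq γ 1 w g, sq_nonneg ‖γ • w + (1 : ℝ) • g‖]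
  have hX := sq_nonneg ‖d‖
  have hW := sq_nonneg ‖w‖
  have hhM : h * M ≤ γ / 4 := by nlinarith
  have hT1 : 0 ≤ 4 * h * γ ^ 3 * (M * ⟪d, g⟫ - ‖g‖ ^ 2) :=
    mul_nonneg (by positivity) (by linarith)
  have hT2 : 0 ≤ 4 * γ * (γ - h * γ ^ 2 + h * M) *
      (2 * γ * ⟪w, g⟫ + M * ⟪d, g⟫ + γ ^ 2 * ‖w‖ ^ 2) :=
    mul_nonneg (mul_nonneg (by positivity) (by nlinarith)) (by linarith)
  have hT3 : 0 ≤ m * M * (γ ^ 2 * ‖d‖ ^ 2 - 4 * γ * ⟪d, w⟫ + 4 * ‖w‖ ^ 2) :=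
    mul_nonneg (by positivity) hdw
  have hT4 : 0 ≤ 4 * γ * (γ * M - h * M ^ 2) * (⟪d, g⟫ - m * ‖d‖ ^ 2) :=
    mul_nonneg (mul_nonneg (by positivity) (by nlinarith)) (by linarith)
  have hT5 : 0 ≤ γ * m * M * (γ - 4 * h * M) * ‖d‖ ^ 2 :=
    mul_nonneg (mul_nonneg (by positivity) (by linarith)) hX
  have hT6 : 0 ≤ (4 * γ ^ 4 - 8 * γ ^ 2 * M - 2 * m * γ ^ 2 - 4 * m * M) * ‖w‖ ^ 2 :=
    mul_nonneg (by nlinarith) hW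
  have hd : d + h • w = (1 : ℝ) • d + h • w := by rw [one_smul]
  have hv : w - h • g - (h * γ) • w = (1 - h * γ) • w + (-h) • g := by module
  rw [modNormSq, modNormSq, hd, hv, norm_smul_add_smul_sq, norm_smul_add_smul_sq, ← sub_nonneg]
  simp only [inner_add_left, inner_add_right, real_inner_smul_left, real_inner_smul_right,
    real_inner_self_eq_norm_sq]
  have hT := add_nonneg (add_nonneg (add_nonneg (add_nonneg (add_nonneg hT1 hT2) hT3) hT4) hT5) hT6
  refine (div_nonneg (mul_nonneg hh hT) (by positivity : (0 : ℝ) ≤ 4 * γ ^ 3 * M)).trans_eq ?_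
  field_simp
  ring

lemma sqrt_le_rpow_mul_sqrt_of_le_mul {u : ℕ → ℝ} {ρ : ℝ} (hρ : 0 ≤ ρ)
    (hu : ∀ k, u (k + 1) ≤ ρ * u k) (k : ℕ) : √(u k) ≤ ρ ^ ((k : ℝ) / 2) * √(u 0) :=
  calc √(u k) ≤ √(ρ ^ k * u 0) := Real.sqrt_le_sqrt (le_geom hρ k fun i _ ↦ hu i)
    _ = ρ ^ ((k : ℝ) / 2) * √(u 0) := by
      rw [Real.sqrt_mul (pow_nonneg hρ k), Real.sqrt_eq_rpow, ← Real.rpow_natCast,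
        ← Real.rpow_mul hρ, mul_one_div]

theorem euler_maruyama_contraction {n : ℕ} (m M γ h : ℝ)
    (U : EuclideanSpace ℝ (Fin n) → ℝ)
    (hm : 0 < m) (hmM : m < M) (hU : ContDiff ℝ 2 U)
    (hHess : ∀ x d : EuclideanSpace ℝ (Fin n),
      m * ‖d‖ ^ 2 ≤ ⟪fderiv ℝ (gradient U) x d, d⟫ ∧
        ⟪fderiv ℝ (gradient U) x d, d⟫ ≤ M * ‖d‖ ^ 2)
    (hγ : γ ≥ 2 * Real.sqrt M) (hh : 0 < h) (hh2 : h < 1 / (2 * γ))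
    (ξ : ℕ → EuclideanSpace ℝ (Fin n))
    (x v x' v' : ℕ → EuclideanSpace ℝ (Fin n))
    (hx : ∀ k, x (k + 1) = x k + h • v k)
    (hv : ∀ k, v (k + 1) = v k - h • gradient U (x k) - (h * γ) • v k
        + Real.sqrt (2 * γ * h) • ξ (k + 1))
    (hx' : ∀ k, x' (k + 1) = x' k + h • v' k)
    (hv' : ∀ k, v' (k + 1) = v' k - h • gradient U (x' k) - (h * γ) • v' k
        + Real.sqrt (2 * γ * h) • ξ (k + 1)) :
    ∀ k : ℕ, modNorm (1 / M) (1 / γ) (x k - x' k, v k - v' k) ≤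
      (1 - m * h / (2 * γ)) ^ ((k : ℝ) / 2) *
        modNorm (1 / M) (1 / γ) (x 0 - x' 0, v 0 - v' 0) := by
  have hM : 0 < M := hm.trans hmM
  have hγ0 : 0 < γ := lt_of_lt_of_le (by positivity) hγ
  have hγM : 4 * M ≤ γ ^ 2 := by nlinarith [Real.sq_sqrt hM.le, Real.sqrt_nonneg M]
  have hhγ : h * γ ≤ 1 := by rw [lt_div_iff₀ (by positivity)] at hh2; linarith
  have hρ : 0 ≤ 1 - m * h / (2 * γ) := by
    rw [sub_nonneg, div_le_one (by positivity)]
    nlinarith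
  have hgrad := hU.differentiable_gradient
  have hstrong := mul_norm_sub_sq_le_inner_of_fderiv hgrad fun x d ↦ (hHess x d).1
  have hcoco := norm_gradient_sub_sq_le_mul_inner (hU.differentiable (by norm_num)) hM
    (fun p q ↦ (by positivity : 0 ≤ m * ‖p - q‖ ^ 2).trans (hstrong p q))
    (inner_le_mul_norm_sub_sq_of_fderiv hgrad fun x d ↦ (hHess x d).2)
  have hstep : ∀ k, modNormSq (1 / M) (1 / γ) (x (k + 1) - x' (k + 1), v (k + 1) - v' (k + 1)) ≤
      (1 - m * h / (2 * γ)) * modNormSq (1 / M) (1 / γ) (x k - x' k, v k - v' k) := fun k ↦ by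
    have hdx : x (k + 1) - x' (k + 1) = (x k - x' k) + h • (v k - v' k) := by
      rw [hx, hx']
      module
    have hdv : v (k + 1) - v' (k + 1) = (v k - v' k)
        - h • (gradient U (x k) - gradient U (x' k)) - (h * γ) • (v k - v' k) := by
      rw [hv, hv']
      module
    rw [hdx, hdv]
    exact modNormSq_step_le hm.le hmM.le hM hγ0 hγM hh.le hhγ (hstrong _ _) (hcoco _ _)
  exact sqrt_le_rpow_mul_sqrt_of_le_mul hρ hstep
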